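/- arXiv:2203.12251 — 2 statements merged into one kernel-verified Lean document; each statement's English description precedes it below -/
import Mathlib

section
/- Let (X,T) be a TDS with metric d and μ an ergodic T-invariant Borel probability measure. Then the upper Brin–Katok local entropy at scale 2ε is at most the infimum of the Kolmogorov–Sinai entropies h_μ(T,P) over all finite Borel measurable partitions P with diameter at most ε: h̄_μ^{BK}(T, 2ε) ≤ inf_{diam(P) ≤ ε} h_μ(T,P). -/
open MeasureTheory Filter Set Metric Topology ENNReal

variable {X : Type*} [MetricSpace X]

/-- The `n`-th Bowen metric `d_n(x,y) = max_{0 ≤ j ≤ n-1} d(T^j x, T^j y)`. -/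
noncomputable def bowenDist (T : X → X) (n : ℕ) (x y : X) : ℝ :=
  ⨆ j ∈ Finset.range n, dist (T^[j] x) (T^[j] y)

/-- The open Bowen ball of order `n` and radius `ε`. -/
def bowenBall (T : X → X) (n : ℕ) (x : X) (ε : ℝ) : Set X :=
  {y | bowenDist T n x y < ε}

/-- The closed Bowen ball of order `n` and radius `ε`. -/
def bowenClosedBall (T : X → X) (n : ℕ) (x : X) (ε : ℝ) : Set X :=
  {y | bowenDist T n x y ≤ ε}

/-- `F` is `(n,ε)`-separated. -/
def IsBowenSeparated (T : X → X) (n : ℕ) (ε : ℝ) (F : Set X) : Prop :=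
  ∀ x ∈ F, ∀ y ∈ F, x ≠ y → ε < bowenDist T n x y

/-- Maximal cardinality of an `(n,ε)`-separated subset of `Z`. -/
noncomputable def sepNum (T : X → X) (n : ℕ) (ε : ℝ) (Z : Set X) : ℕ :=
  sSup {k | ∃ F : Finset X, ↑F ⊆ Z ∧ IsBowenSeparated T n ε ↑F ∧ F.card = k}

/-- A finite Borel measurable partition of `X`. -/
def IsMeasPartition [MeasurableSpace X] (P : Finset (Set X)) : Prop :=
  (∀ A ∈ P, MeasurableSet A) ∧ (∀ A ∈ P, ∀ B ∈ P, A ≠ B → Disjoint A B) ∧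
    (⋃ A ∈ P, A) = Set.univ

/-- A finite open cover of `X`. -/
def IsOpenCover (U : Finset (Set X)) : Prop :=
  (∀ A ∈ U, IsOpen A) ∧ (⋃ A ∈ U, A) = Set.univ

/-- The `n`-th join `⋁_{j=0}^{n-1} T^{-j} P` of a finite family of sets. -/
noncomputable def joinPart (T : X → X) (P : Finset (Set X)) (n : ℕ) : Finset (Set X) := by
  classical
  exact (Fintype.piFinset (fun _ : Fin n => P)).image
    (fun f => ⋂ j : Fin n, T^[(j : ℕ)] ⁻¹' f j)

/-- Static entropy of a finite partition. -/
noncomputable def partEntropy [MeasurableSpace X] (μ : Measure X) (P : Finset (Set X)) : ℝ :=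
  ∑ A ∈ P, Real.negMulLog (μ A).toReal

/-- Kolmogorov–Sinai entropy of `T` w.r.t. the partition `P`. -/
noncomputable def ksEntropyPart [MeasurableSpace X] (T : X → X) (μ : Measure X)
    (P : Finset (Set X)) : ℝ :=
  limsup (fun n => partEntropy μ (joinPart T P n) / n) atTop

/-- Kolmogorov–Sinai entropy of `(X,T,μ)`. -/
noncomputable def ksEntropy [MeasurableSpace X] (T : X → X) (μ : Measure X) : ℝ≥0∞ :=
  ⨆ (P : Finset (Set X)) (_ : IsMeasPartition P), ENNReal.ofReal (ksEntropyPart T μ P)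

/-- `N_μ(V, c)`: the minimal cardinality of a subfamily of `V` whose union has
measure at least `c`. -/
noncomputable def coverNum [MeasurableSpace X] (μ : Measure X) (V : Finset (Set X)) (c : ℝ) : ℕ :=
  sInf {k | ∃ W : Finset (Set X), W ⊆ V ∧ W.card = k ∧ ENNReal.ofReal c ≤ μ (⋃ A ∈ W, A)}

/-- Shapira's entropy of the open cover `U` at level `δ`. -/
noncomputable def shapiraEnt [MeasurableSpace X] (T : X → X) (μ : Measure X)
    (U : Finset (Set X)) (δ : ℝ) : ℝ :=
  limsup (fun n => Real.log (coverNum μ (joinPart T U n) δ) / n) atTop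

/-- `R_μ^δ(T,n,ε)`: minimal number of Bowen `(n,ε)`-balls whose union has measure `> 1 - δ`. -/
noncomputable def katokCovNum [MeasurableSpace X] (T : X → X) (μ : Measure X) (n : ℕ)
    (ε δ : ℝ) : ℕ :=
  sInf {k | ∃ E : Finset X, E.card = k ∧
    1 - ENNReal.ofReal δ < μ (⋃ x ∈ E, bowenBall T n x ε)}

/-- Upper Katok `ε`-entropy at level `δ`. -/
noncomputable def katokUpperδ [MeasurableSpace X] (T : X → X) (μ : Measure X) (ε δ : ℝ) : ℝ≥0∞ :=
  limsup (fun n => ENNReal.ofReal (Real.log (katokCovNum T μ n ε δ)) / n) atTop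

/-- Lower Katok `ε`-entropy at level `δ`. -/
noncomputable def katokLowerδ [MeasurableSpace X] (T : X → X) (μ : Measure X) (ε δ : ℝ) : ℝ≥0∞ :=
  liminf (fun n => ENNReal.ofReal (Real.log (katokCovNum T μ n ε δ)) / n) atTop

/-- Upper Katok `ε`-entropy: the limit of `katokUpperδ` as `δ → 0`. -/
noncomputable def katokUpper [MeasurableSpace X] (T : X → X) (μ : Measure X) (ε : ℝ) : ℝ≥0∞ :=
  ⨆ δ ∈ Set.Ioo (0 : ℝ) 1, katokUpperδ T μ ε δ

/-- Lower Katok `ε`-entropy: the limit of `katokLowerδ` as `δ → 0`. -/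
noncomputable def katokLower [MeasurableSpace X] (T : X → X) (μ : Measure X) (ε : ℝ) : ℝ≥0∞ :=
  ⨆ δ ∈ Set.Ioo (0 : ℝ) 1, katokLowerδ T μ ε δ

/-- `-log μ(S)`, as an extended nonnegative real (`∞` when `μ S = 0`). -/
noncomputable def negLogMeas [MeasurableSpace X] (μ : Measure X) (S : Set X) : ℝ≥0∞ :=
  if μ S = 0 then ⊤ else ENNReal.ofReal (-Real.log (μ S).toReal)

/-- Upper Brin–Katok local `ε`-entropy of `μ`. -/
noncomputable def bkUpper [MeasurableSpace X] (T : X → X) (μ : Measure X) (ε : ℝ) : ℝ≥0∞ :=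
  ∫⁻ x, limsup (fun n => negLogMeas μ (bowenBall T n x ε) / n) atTop ∂μ

/-- Lower Brin–Katok local `ε`-entropy of `μ`. -/
noncomputable def bkLower [MeasurableSpace X] (T : X → X) (μ : Measure X) (ε : ℝ) : ℝ≥0∞ :=
  ∫⁻ x, liminf (fun n => negLogMeas μ (bowenBall T n x ε) / n) atTop ∂μ

/-- `∑ e^{-s n_i}` over a family of (center, order) pairs. -/
noncomputable def weightSum (s : ℝ) (I : Set (X × ℕ)) : ℝ≥0∞ :=
  ∑' p : I, ENNReal.ofReal (Real.exp (-(s * ((p : X × ℕ).2 : ℝ))))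

/-- Carathéodory–Pesin Bowen pre-measure `M(T,d,Z,s,N,ε)`. -/
noncomputable def bowenPre (T : X → X) (Z : Set X) (s : ℝ) (N : ℕ) (ε : ℝ) : ℝ≥0∞ :=
  ⨅ (I : Set (X × ℕ)) (_ : I.Countable ∧ (∀ p ∈ I, N ≤ p.2) ∧
      Z ⊆ ⋃ p ∈ I, bowenBall T p.2 p.1 ε), weightSum s I

/-- `M(T,d,Z,s,ε) = lim_{N→∞} M(T,d,Z,s,N,ε)`. -/
noncomputable def bowenCP (T : X → X) (Z : Set X) (s : ℝ) (ε : ℝ) : ℝ≥0∞ :=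
  ⨆ N, bowenPre T Z s N ε

/-- Bowen `ε`-entropy of the subset `Z`: the critical value of `s ↦ M(T,d,Z,s,ε)`. -/
noncomputable def bowenEnt (T : X → X) (Z : Set X) (ε : ℝ) : ℝ≥0∞ :=
  sInf {a : ℝ≥0∞ | ∃ s : ℝ, 0 ≤ s ∧ a = ENNReal.ofReal s ∧ bowenCP T Z s ε = 0}

/-- Packing pre-measure `P(T,d,Z,s,N,ε)`: supremum of `∑ e^{-n_i s}` over pairwise disjoint
families of closed Bowen balls with centers in `Z` and orders `≥ N`. -/
noncomputable def packPre (T : X → X) (Z : Set X) (s : ℝ) (N : ℕ) (ε : ℝ) : ℝ≥0∞ :=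
  ⨆ (I : Set (X × ℕ)) (_ : I.Countable ∧ (∀ p ∈ I, N ≤ p.2 ∧ p.1 ∈ Z) ∧
      I.PairwiseDisjoint (fun p => bowenClosedBall T p.2 p.1 ε)), weightSum s I

/-- `P(T,d,Z,s,ε) = lim_{N→∞} P(T,d,Z,s,N,ε)`. -/
noncomputable def packCP (T : X → X) (Z : Set X) (s : ℝ) (ε : ℝ) : ℝ≥0∞ :=
  ⨅ N, packPre T Z s N ε

/-- `𝒫(T,d,Z,s,ε) = inf {∑_i P(T,d,Z_i,s,ε) : Z ⊆ ⋃ Z_i}`. -/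
noncomputable def packOuter (T : X → X) (Z : Set X) (s : ℝ) (ε : ℝ) : ℝ≥0∞ :=
  ⨅ (Zs : ℕ → Set X) (_ : Z ⊆ ⋃ i, Zs i), ∑' i, packCP T (Zs i) s ε

/-- Packing `ε`-entropy of the subset `Z`: critical value of `s ↦ 𝒫(T,d,Z,s,ε)`. -/
noncomputable def packEnt (T : X → X) (Z : Set X) (ε : ℝ) : ℝ≥0∞ :=
  sInf {a : ℝ≥0∞ | ∃ s : ℝ, 0 ≤ s ∧ a = ENNReal.ofReal s ∧ packOuter T Z s ε = 0}

/-- Packing topological entropy of a subset: `lim_{ε → 0} h_top^P(T,Z,d,ε)`. -/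
noncomputable def packEntTotal (T : X → X) (Z : Set X) : ℝ≥0∞ :=
  ⨆ (ε : ℝ) (_ : 0 < ε), packEnt T Z ε

/-- Katok-type Bowen pre-measure `M^δ(T,d,μ,s,N,ε)` for a measure `μ`. -/
noncomputable def bowenPreMeas [MeasurableSpace X] (T : X → X) (μ : Measure X) (s : ℝ)
    (N : ℕ) (ε δ : ℝ) : ℝ≥0∞ :=
  ⨅ (I : Set (X × ℕ)) (_ : I.Countable ∧ (∀ p ∈ I, N ≤ p.2) ∧
      1 - ENNReal.ofReal δ < μ (⋃ p ∈ I, bowenBall T p.2 p.1 ε)), weightSum s I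

/-- The critical value `M^δ(T,d,μ,ε)`. -/
noncomputable def bowenEntMeasδ [MeasurableSpace X] (T : X → X) (μ : Measure X)
    (ε δ : ℝ) : ℝ≥0∞ :=
  sInf {a : ℝ≥0∞ | ∃ s : ℝ, 0 ≤ s ∧ a = ENNReal.ofReal s ∧
    (⨆ N, bowenPreMeas T μ s N ε δ) = 0}

/-- `M_μ(T,d,ε) = lim_{δ → 0} M^δ(T,d,μ,ε)`. -/
noncomputable def bowenEntMeas [MeasurableSpace X] (T : X → X) (μ : Measure X) (ε : ℝ) : ℝ≥0∞ :=
  ⨆ δ ∈ Set.Ioo (0 : ℝ) 1, bowenEntMeasδ T μ ε δ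

/-- `𝒫^δ(T,d,μ,s,ε) = inf {∑_i P(T,d,Z_i,s,ε) : μ(⋃ Z_i) > 1 - δ}`. -/
noncomputable def packOuterMeas [MeasurableSpace X] (T : X → X) (μ : Measure X) (s : ℝ)
    (ε δ : ℝ) : ℝ≥0∞ :=
  ⨅ (Zs : ℕ → Set X) (_ : 1 - ENNReal.ofReal δ < μ (⋃ i, Zs i)), ∑' i, packCP T (Zs i) s ε

/-- The critical value `𝒫^δ(T,d,μ,ε)`. -/
noncomputable def packEntMeasδ [MeasurableSpace X] (T : X → X) (μ : Measure X)
    (ε δ : ℝ) : ℝ≥0∞ :=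
  sInf {a : ℝ≥0∞ | ∃ s : ℝ, 0 ≤ s ∧ a = ENNReal.ofReal s ∧ packOuterMeas T μ s ε δ = 0}

/-- `𝒫_μ(T,d,ε) = lim_{δ → 0} 𝒫^δ(T,d,μ,ε)`. -/
noncomputable def packEntMeas [MeasurableSpace X] (T : X → X) (μ : Measure X) (ε : ℝ) : ℝ≥0∞ :=
  ⨆ δ ∈ Set.Ioo (0 : ℝ) 1, packEntMeasδ T μ ε δ

/-- The `n`-th empirical measure `(1/n) ∑_{j=0}^{n-1} δ_{T^j x}`. -/
noncomputable def empMeas [MeasurableSpace X] (T : X → X) (x : X) (n : ℕ) : Measure X :=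
  (n : ℝ≥0∞)⁻¹ • ∑ j ∈ Finset.range n, Measure.dirac (T^[j] x)

set_option linter.unusedSectionVars false in
lemma empMeas_finite [MeasurableSpace X] (T : X → X) (x : X) (n : ℕ) :
    IsFiniteMeasure (empMeas T x n) := by
  refine ⟨?_⟩
  have h : (∑ j ∈ Finset.range n, Measure.dirac (T^[j] x)) Set.univ = n := by
    rw [Measure.finset_sum_apply]
    simp
  rw [empMeas, Measure.smul_apply, smul_eq_mul, h]
  rcases eq_or_ne (n : ℝ≥0∞) 0 with h0 | h0
  · simp [h0]
  · rw [ENNReal.inv_mul_cancel h0 (by simp)]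
    exact ENNReal.one_lt_top

/-- The `n`-th empirical measure as a finite measure. -/
noncomputable def empFM [MeasurableSpace X] (T : X → X) (x : X) (n : ℕ) : FiniteMeasure X :=
  ⟨empMeas T x n, empMeas_finite T x n⟩

/-- The set of generic points of `μ`: points whose empirical measures converge weakly to `μ`. -/
def genPts [MeasurableSpace X] [OpensMeasurableSpace X] (T : X → X) (μ : Measure X) [IsFiniteMeasure μ] : Set X :=
  {x | Tendsto (fun n => empFM T x n) atTop (𝓝 (⟨μ, ‹_›⟩ : FiniteMeasure X))}

/-- `X_{n,F}`: points whose `n`-th empirical measure lies in `F`. -/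
def XnF [MeasurableSpace X] [OpensMeasurableSpace X] (T : X → X) (F : Set (FiniteMeasure X)) (n : ℕ) : Set X :=
  {x | empFM T x n ∈ F}

/-- Pfister–Sullivan `ε`-entropy of `μ`. -/
noncomputable def psEnt [MeasurableSpace X] [OpensMeasurableSpace X] (T : X → X) (μ : Measure X) [IsFiniteMeasure μ]
    (ε : ℝ) : ℝ≥0∞ :=
  ⨅ (F : Set (FiniteMeasure X)) (_ : F ∈ @nhds (FiniteMeasure X) _ ⟨μ, ‹_›⟩),
    limsup (fun n => ENNReal.ofReal (Real.log (sepNum T n ε (XnF T F n)) / n)) atTop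

/-- `limsup_{ε → 0⁺} f(ε)/log(1/ε)`. -/
noncomputable def mmUpper (f : ℝ → ℝ≥0∞) : ℝ≥0∞ :=
  limsup (fun ε : ℝ => f ε / ENNReal.ofReal (Real.log (1 / ε))) (𝓝[>] (0 : ℝ))

/-- `liminf_{ε → 0⁺} f(ε)/log(1/ε)`. -/
noncomputable def mmLower (f : ℝ → ℝ≥0∞) : ℝ≥0∞ :=
  liminf (fun ε : ℝ => f ε / ENNReal.ofReal (Real.log (1 / ε))) (𝓝[>] (0 : ℝ))

/-- Bowen upper metric mean dimension of a subset. -/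
noncomputable def mdimBUpper (T : X → X) (Z : Set X) : ℝ≥0∞ :=
  mmUpper (fun ε => bowenEnt T Z ε)

/-- Packing upper metric mean dimension of a subset. -/
noncomputable def mdimPUpper (T : X → X) (Z : Set X) : ℝ≥0∞ :=
  mmUpper (fun ε => packEnt T Z ε)

/-- Packing lower metric mean dimension of a subset. -/
noncomputable def mdimPLower (T : X → X) (Z : Set X) : ℝ≥0∞ :=
  mmLower (fun ε => packEnt T Z ε)

/-!
If every cell of `P` has diameter at most `ε`, the cell `Pⁿ(x)` of `x` in `⋁_{j<n} T⁻ʲ P` lies in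
the Bowen ball `B_n(x, 2ε)`, so it suffices to prove the upper half of the Shannon–McMillan–Breiman
theorem: `limsup -(1/n) log μ(Pⁿ(x)) ≤ h_μ(T, P)` for almost every `x`.

For this we follow Algoet and Cover. Compare `μ(Pᵐ⁺ˡ(x))` with the mass given to the same cell by
the `m`-step Markov approximation of `μ`. These masses sum to at most one, so by Markov's inequality
and Borel–Cantelli, `μ(Pᵐ⁺ˡ(x))` is eventually at least `e^{-δl}` times the Markov mass. Up to a
bounded factor, the Markov mass is `exp (-∑_{k<l} I_m(Tᵏ x))`, where `I_m` is the conditional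
information of `P` given `T⁻¹ Pᵐ`. By the maximal ergodic lemma, the averages of `I_m` along orbits
eventually stay below `∫ I_m + δ = H(Pᵐ⁺¹) - H(Pᵐ) + δ`, and these entropy increments come
arbitrarily close to `h_μ(T, P)`.
-/

section Birkhoff

variable {α : Type*} {T : α → α} {φ : α → ℝ}

/-- `birkhoffMax T φ N x = max (0, S₁ φ x, …, S_N φ x)` for the Birkhoff sums `S_k φ`. -/
noncomputable def birkhoffMax (T : α → α) (φ : α → ℝ) : ℕ → α → ℝ
  | 0, _ => 0
  | N + 1, x => max (φ x + birkhoffMax T φ N (T x)) 0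

lemma birkhoffMax_nonneg (N : ℕ) (x : α) : 0 ≤ birkhoffMax T φ N x := by
  cases N with
  | zero => exact le_rfl
  | succ N => exact le_max_right _ _

lemma birkhoffMax_le_succ (N : ℕ) (x : α) : birkhoffMax T φ N x ≤ birkhoffMax T φ (N + 1) x := by
  induction N generalizing x with
  | zero => exact birkhoffMax_nonneg 1 x
  | succ N ih => exact max_le_max (add_le_add_right (ih (T x)) _) le_rfl

lemma birkhoffSum_le_birkhoffMax {k N : ℕ} (hk : k ≤ N) (x : α) :
    birkhoffSum T φ k x ≤ birkhoffMax T φ N x := by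
  induction N generalizing k x with
  | zero => simp [Nat.le_zero.1 hk, birkhoffMax]
  | succ N ih =>
    rcases k with _ | k
    · simpa using birkhoffMax_nonneg (N + 1) x
    · rw [birkhoffSum_succ']
      exact le_max_of_le_left (add_le_add_right (ih (by omega) (T x)) _)

variable [MeasurableSpace α] {μ : Measure α}

lemma measurable_birkhoffMax (hT : Measurable T) (hφ : Measurable φ) (N : ℕ) :
    Measurable (birkhoffMax T φ N) := by
  induction N with
  | zero => exact measurable_const
  | succ N ih => exact (hφ.add (ih.comp hT)).max measurable_const

lemma measurableSet_birkhoffMax_pos (hT : Measurable T) (hφ : Measurable φ) (N : ℕ) :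
    MeasurableSet {x | 0 < φ x + birkhoffMax T φ N (T x)} :=
  measurableSet_lt measurable_const (hφ.add ((measurable_birkhoffMax hT hφ N).comp hT))

namespace MeasureTheory.MeasurePreserving

lemma integrable_birkhoffMax (hT : MeasurePreserving T μ μ) (hφ : Integrable φ μ) (N : ℕ) :
    Integrable (birkhoffMax T φ N) μ := by
  induction N with
  | zero => exact integrable_zero _ _ μ
  | succ N ih => exact (hφ.add (hT.integrable_comp_of_integrable ih)).pos_part

lemma integral_comp_of_measurable {g : α → ℝ} (hT : MeasurePreserving T μ μ)
    (hg : Measurable g) : ∫ x, g (T x) ∂μ = ∫ x, g x ∂μ := by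
  rw [← integral_map hT.measurable.aemeasurable hg.aestronglyMeasurable, hT.map_eq]

/-- The maximal ergodic lemma. -/
theorem setIntegral_birkhoffMax_pos_nonneg (hT : MeasurePreserving T μ μ) (hφm : Measurable φ)
    (hφ : Integrable φ μ) (N : ℕ) :
    0 ≤ ∫ x in {x | 0 < φ x + birkhoffMax T φ N (T x)}, φ x ∂μ := by
  set E := {x | 0 < φ x + birkhoffMax T φ N (T x)}
  have hE : MeasurableSet E := measurableSet_birkhoffMax_pos hT.measurable hφm N
  have hM := hT.integrable_birkhoffMax hφ (N + 1)
  have hMT : Integrable (fun x => birkhoffMax T φ N (T x)) μ :=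
    hT.integrable_comp_of_integrable (hT.integrable_birkhoffMax hφ N)
  have hpt : ∀ x, birkhoffMax T φ (N + 1) x - birkhoffMax T φ N (T x) ≤ E.indicator φ x := by
    intro x
    by_cases hx : x ∈ E
    · rw [Set.indicator_of_mem hx, birkhoffMax, max_eq_left hx.le]
      exact (add_sub_cancel_right _ _).le
    · rw [Set.indicator_of_notMem hx, birkhoffMax, max_eq_right (not_lt.1 hx)]
      linarith [birkhoffMax_nonneg (T := T) (φ := φ) N (T x)]
  calc (0 : ℝ) ≤ ∫ x, birkhoffMax T φ (N + 1) x ∂μ - ∫ x, birkhoffMax T φ N x ∂μ :=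
        sub_nonneg.2 (integral_mono (hT.integrable_birkhoffMax hφ N) hM (birkhoffMax_le_succ N))
    _ = ∫ x, (birkhoffMax T φ (N + 1) x - birkhoffMax T φ N (T x)) ∂μ := by
        rw [integral_sub hM hMT,
          hT.integral_comp_of_measurable (measurable_birkhoffMax hT.measurable hφm N)]
    _ ≤ ∫ x, E.indicator φ x ∂μ := integral_mono (hM.sub hMT) (hφ.indicator hE) hpt
    _ = ∫ x in E, φ x ∂μ := integral_indicator hE

theorem integral_nonneg_of_ae_exists_birkhoffSum_pos (hT : MeasurePreserving T μ μ)
    (hφm : Measurable φ) (hφ : Integrable φ μ) (h : ∀ᵐ x ∂μ, ∃ n, 0 < birkhoffSum T φ n x) :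
    0 ≤ ∫ x, φ x ∂μ := by
  set E : ℕ → Set α := fun N => {x | 0 < φ x + birkhoffMax T φ N (T x)}
  have hmono : Monotone E := monotone_nat_of_le_succ fun N x hx =>
    lt_of_lt_of_le (α := ℝ) hx (add_le_add_right (birkhoffMax_le_succ N (T x)) _)
  have hcover : ∀ᵐ x ∂μ, x ∈ ⋃ N, E N := by
    filter_upwards [h] with x ⟨n, hn⟩
    rcases n with _ | k
    · simp at hn
    · rw [birkhoffSum_succ'] at hn
      exact Set.mem_iUnion.2
        ⟨k, hn.trans_le (add_le_add_right (birkhoffSum_le_birkhoffMax le_rfl _) _)⟩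
  have hlim := tendsto_setIntegral_of_monotone
    (fun N => measurableSet_birkhoffMax_pos hT.measurable hφm N) hmono hφ.integrableOn
  rw [Measure.restrict_eq_self_of_ae_mem hcover] at hlim
  exact ge_of_tendsto' hlim fun N => hT.setIntegral_birkhoffMax_pos_nonneg hφm hφ N

end MeasureTheory.MeasurePreserving

end Birkhoff

section ErgodicUpperBound

variable {α : Type*} {T : α → α} {f : α → ℝ} {C : ℝ}

lemma limsup_eq_of_tendsto_sub {ι : Type*} {l : Filter ι} [l.NeBot] {u v : ι → ℝ}
    (hu : IsBoundedUnder (· ≤ ·) l u) (hu' : IsBoundedUnder (· ≥ ·) l u)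
    (h : Tendsto (v - u) l (𝓝 0)) : limsup v l = limsup u l := by
  have hv : v = u + (v - u) := by abel
  have hw := h.isBoundedUnder_le
  have hw' := h.isBoundedUnder_ge
  rw [hv]
  refine le_antisymm ?_ ?_
  · simpa [h.limsup_eq] using limsup_add_le hu' hu hw'.isCoboundedUnder_le hw
  · simpa [h.liminf_eq] using le_limsup_add hu hu'.isCoboundedUnder_le hw hw'

lemma abs_birkhoffAverage_le (hf : ∀ x, |f x| ≤ C) (n : ℕ) (x : α) :
    |birkhoffAverage ℝ T f n x| ≤ C := by
  rcases n.eq_zero_or_pos with rfl | hn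
  · simpa using (abs_nonneg _).trans (hf x)
  rw [birkhoffAverage, smul_eq_mul, abs_mul, abs_inv, Nat.abs_cast, inv_mul_le_iff₀ (by positivity)]
  calc |birkhoffSum T f n x| ≤ ∑ k ∈ Finset.range n, |f (T^[k] x)| := Finset.abs_sum_le_sum_abs _ _
    _ ≤ ∑ _k ∈ Finset.range n, C := Finset.sum_le_sum fun k _ => hf _
    _ = n * C := by simp

lemma limsup_birkhoffAverage_apply (hf : ∀ x, |f x| ≤ C) (x : α) :
    limsup (birkhoffAverage ℝ T f · (T x)) atTop = limsup (birkhoffAverage ℝ T f · x) atTop := by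
  have hbdd : Bornology.IsBounded (Set.range f) :=
    isBounded_iff_forall_norm_le.2 ⟨C, by rintro _ ⟨y, rfl⟩; exact hf y⟩
  exact limsup_eq_of_tendsto_sub
    (isBoundedUnder_of ⟨C, fun n => (le_abs_self _).trans (abs_birkhoffAverage_le hf n x)⟩)
    (isBoundedUnder_of ⟨-C, fun n => neg_le_of_abs_le (abs_birkhoffAverage_le hf n x)⟩)
    (tendsto_birkhoffAverage_apply_sub_birkhoffAverage' ℝ hbdd T x)

variable [MeasurableSpace α] {μ : Measure α}

lemma measurable_birkhoffSum (hT : Measurable T) (hf : Measurable f) (n : ℕ) :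
    Measurable (birkhoffSum T f n) :=
  Finset.measurable_sum _ fun k _ => hf.comp (hT.iterate k)

theorem Ergodic.ae_limsup_birkhoffAverage_le_integral [IsProbabilityMeasure μ]
    (hμ : Ergodic T μ) (hfm : Measurable f) (hf : ∀ x, |f x| ≤ C) :
    ∀ᵐ x ∂μ, limsup (birkhoffAverage ℝ T f · x) atTop ≤ ∫ x, f x ∂μ := by
  have hT := hμ.toMeasurePreserving
  have hg : Measurable fun x => limsup (birkhoffAverage ℝ T f · x) atTop :=
    Measurable.limsup fun n => (measurable_birkhoffSum hT.measurable hfm n).const_smul (n : ℝ)⁻¹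
  obtain ⟨c, hc⟩ := hμ.ae_eq_const_of_ae_eq_comp₀ hg.nullMeasurable
    (Eventually.of_forall fun x => limsup_birkhoffAverage_apply hf x)
  suffices hcf : c ≤ ∫ x, f x ∂μ by
    filter_upwards [hc] with x hx
    exact hx.trans_le hcf
  by_contra! hlt
  obtain ⟨a, hfa, hac⟩ := exists_between hlt
  have hpos : ∀ᵐ x ∂μ, ∃ n, 0 < birkhoffSum T (fun x => f x - a) n x := by
    filter_upwards [hc] with x hx
    have hcob : IsCoboundedUnder (· ≤ ·) atTop (birkhoffAverage ℝ T f · x) :=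
      isCoboundedUnder_le_of_le atTop fun n => neg_le_of_abs_le (abs_birkhoffAverage_le hf n x)
    obtain ⟨n, han, hn⟩ := ((frequently_lt_of_lt_limsup hcob (hac.trans_eq hx.symm)).and_eventually
      (eventually_gt_atTop 0)).exists
    refine ⟨n, ?_⟩
    rw [birkhoffAverage, smul_eq_mul, lt_inv_mul_iff₀ (by positivity)] at han
    simpa [birkhoffSum, Finset.sum_sub_distrib] using han
  have hfi : Integrable f μ := .of_bound hfm.aestronglyMeasurable C (.of_forall hf)
  have hint := hT.integral_nonneg_of_ae_exists_birkhoffSum_pos (hfm.sub_const a)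
    (hfi.sub (integrable_const a)) hpos
  rw [integral_sub hfi (integrable_const a), integral_const, probReal_univ, one_smul] at hint
  linarith

end ErgodicUpperBound

section Partition

variable {α : Type*} {P Q : Finset (Set α)} {T : α → α}

open Classical in
/-- The cell of `P` containing `x` (`∅` if there is none). -/
noncomputable def partCell (P : Finset (Set α)) (x : α) : Set α :=
  if h : ∃ A ∈ P, x ∈ A then h.choose else ∅

/-- The cell of `joinPart T P n` containing `x`. -/
def joinCell (T : α → α) (P : Finset (Set α)) (n : ℕ) (x : α) : Set α :=
  {y | ∀ j < n, T^[j] y ∈ partCell P (T^[j] x)}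

lemma joinCell_succ (n : ℕ) (x : α) :
    joinCell T P (n + 1) x = partCell P x ∩ T ⁻¹' joinCell T P n (T x) := by
  ext y
  simp only [joinCell, Set.mem_ofPred_eq, Set.mem_inter_iff, Set.mem_preimage,
    Nat.forall_lt_succ_left, Function.iterate_zero_apply, Function.iterate_succ_apply]

lemma apply_mem_joinCell {n : ℕ} {x y : α} (hy : y ∈ joinCell T P (n + 1) x) :
    T y ∈ joinCell T P n (T x) := by
  rw [joinCell_succ] at hy
  exact hy.2

lemma joinCell_anti {m n : ℕ} (h : m ≤ n) (x : α) : joinCell T P n x ⊆ joinCell T P m x :=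
  fun _ hy j hj => hy j (hj.trans_le h)

lemma joinCell_add_subset_preimage (k n : ℕ) (x : α) :
    joinCell T P (k + n) x ⊆ T^[k] ⁻¹' joinCell T P n (T^[k] x) := by
  intro y hy j hj
  simpa [← Function.iterate_add_apply, add_comm] using hy (j + k) (by omega)

lemma mem_joinPart_iff {n : ℕ} {D : Set α} : D ∈ joinPart T P n ↔
    ∃ f : Fin n → Set α, (∀ j, f j ∈ P) ∧ ⋂ j : Fin n, T^[(j : ℕ)] ⁻¹' f j = D := by
  simp [joinPart]

lemma joinCell_eq_iInter (n : ℕ) (x : α) :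
    joinCell T P n x = ⋂ j : Fin n, T^[(j : ℕ)] ⁻¹' partCell P (T^[(j : ℕ)] x) := by
  ext y
  simp [joinCell, Fin.forall_iff]

lemma card_joinPart_le (n : ℕ) : (joinPart T P n).card ≤ P.card ^ n := by
  rw [joinPart]
  exact Finset.card_image_le.trans (by simp)

variable [MeasurableSpace α]

lemma IsMeasPartition.exists_mem (hP : IsMeasPartition P) (x : α) : ∃ A ∈ P, x ∈ A := by
  have hx : x ∈ ⋃ A ∈ P, A := hP.2.2 ▸ Set.mem_univ x
  simpa using hx

lemma IsMeasPartition.eq_of_mem (hP : IsMeasPartition P) {A B : Set α} (hA : A ∈ P) (hB : B ∈ P)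
    {x : α} (hxA : x ∈ A) (hxB : x ∈ B) : A = B :=
  by_contra fun h => Set.disjoint_left.1 (hP.2.1 A hA B hB h) hxA hxB

lemma IsMeasPartition.partCell_mem (hP : IsMeasPartition P) (x : α) : partCell P x ∈ P := by
  rw [partCell, dif_pos (hP.exists_mem x)]
  exact (hP.exists_mem x).choose_spec.1

lemma IsMeasPartition.mem_partCell (hP : IsMeasPartition P) (x : α) : x ∈ partCell P x := by
  rw [partCell, dif_pos (hP.exists_mem x)]
  exact (hP.exists_mem x).choose_spec.2

lemma IsMeasPartition.partCell_eq (hP : IsMeasPartition P) {A : Set α} (hA : A ∈ P) {x : α}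
    (hx : x ∈ A) : partCell P x = A :=
  hP.eq_of_mem (hP.partCell_mem x) hA (hP.mem_partCell x) hx

lemma IsMeasPartition.mem_joinCell_self (hP : IsMeasPartition P) (n : ℕ) (x : α) :
    x ∈ joinCell T P n x :=
  fun _ _ => hP.mem_partCell _

lemma IsMeasPartition.joinCell_mem_joinPart (hP : IsMeasPartition P) (n : ℕ) (x : α) :
    joinCell T P n x ∈ joinPart T P n :=
  mem_joinPart_iff.2 ⟨fun j => partCell P (T^[(j : ℕ)] x), fun _ => hP.partCell_mem _,
    (joinCell_eq_iInter n x).symm⟩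

lemma IsMeasPartition.joinCell_eq_of_mem_joinPart (hP : IsMeasPartition P) {n : ℕ} {D : Set α}
    (hD : D ∈ joinPart T P n) {x : α} (hx : x ∈ D) : joinCell T P n x = D := by
  obtain ⟨f, hf, rfl⟩ := mem_joinPart_iff.1 hD
  rw [joinCell_eq_iInter]
  exact Set.iInter_congr fun j => by rw [hP.partCell_eq (hf j) (Set.mem_iInter.1 hx j)]

lemma IsMeasPartition.joinCell_eq_of_mem (hP : IsMeasPartition P) {n : ℕ} {x y : α}
    (hy : y ∈ joinCell T P n x) : joinCell T P n y = joinCell T P n x :=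
  hP.joinCell_eq_of_mem_joinPart (hP.joinCell_mem_joinPart n x) hy

lemma IsMeasPartition.measurableSet_of_mem_joinPart (hP : IsMeasPartition P) (hT : Measurable T)
    {n : ℕ} {D : Set α} (hD : D ∈ joinPart T P n) : MeasurableSet D := by
  obtain ⟨f, hf, rfl⟩ := mem_joinPart_iff.1 hD
  exact .iInter fun j => (hP.1 _ (hf j)).preimage (hT.iterate _)

lemma IsMeasPartition.measurableSet_joinCell (hP : IsMeasPartition P) (hT : Measurable T)
    (n : ℕ) (x : α) : MeasurableSet (joinCell T P n x) :=
  hP.measurableSet_of_mem_joinPart hT (hP.joinCell_mem_joinPart n x)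

lemma isMeasPartition_joinPart (hP : IsMeasPartition P) (hT : Measurable T) (n : ℕ) :
    IsMeasPartition (joinPart T P n) := by
  refine ⟨fun D hD => hP.measurableSet_of_mem_joinPart hT hD, fun D hD D' hD' hne => ?_, ?_⟩
  · refine Set.disjoint_left.2 fun x hxD hxD' => hne ?_
    rw [← hP.joinCell_eq_of_mem_joinPart hD hxD, hP.joinCell_eq_of_mem_joinPart hD' hxD']
  · exact Set.eq_univ_of_forall fun x =>
      Set.mem_biUnion (hP.joinCell_mem_joinPart n x) (hP.mem_joinCell_self n x)

end Partition

section CellIntegrals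

variable {α : Type*} [MeasurableSpace α] {μ : Measure α} {P Q : Finset (Set α)} {T : α → α}
  {G : α → ℝ}

lemma IsMeasPartition.eq_sum_indicator (hQ : IsMeasPartition Q) {g : Set α → ℝ}
    (hG : ∀ A ∈ Q, ∀ x ∈ A, G x = g A) :
    G = fun x => ∑ A ∈ Q, A.indicator (fun _ => g A) x := by
  funext x
  obtain ⟨A, hA, hx⟩ := hQ.exists_mem x
  rw [Finset.sum_eq_single_of_mem A hA fun B hB hBA => Set.indicator_of_notMem
    (fun hxB => hBA (hQ.eq_of_mem hB hA hxB hx)) _, Set.indicator_of_mem hx, hG A hA x hx]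

lemma IsMeasPartition.exists_eq_sum_indicator (hQ : IsMeasPartition Q)
    (hG : ∀ A ∈ Q, ∀ x ∈ A, ∀ y ∈ A, G y = G x) :
    ∃ g : Set α → ℝ, G = fun x => ∑ A ∈ Q, A.indicator (fun _ => g A) x := by
  classical
  refine ⟨fun A => if h : A.Nonempty then G h.some else 0, hQ.eq_sum_indicator fun A hA x hx => ?_⟩
  rw [dif_pos ⟨x, hx⟩]
  exact hG A hA _ (Set.Nonempty.some_mem _) x hx

lemma IsMeasPartition.measurable_of_forall_eq (hQ : IsMeasPartition Q)
    (hG : ∀ A ∈ Q, ∀ x ∈ A, ∀ y ∈ A, G y = G x) : Measurable G := by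
  obtain ⟨g, rfl⟩ := hQ.exists_eq_sum_indicator hG
  exact Finset.measurable_sum _ fun A hA => measurable_const.indicator (hQ.1 A hA)

lemma IsMeasPartition.integrable_of_forall_eq [IsFiniteMeasure μ] (hQ : IsMeasPartition Q)
    (hG : ∀ A ∈ Q, ∀ x ∈ A, ∀ y ∈ A, G y = G x) : Integrable G μ := by
  obtain ⟨g, rfl⟩ := hQ.exists_eq_sum_indicator hG
  exact integrable_finsetSum _ fun A hA => (integrable_const _).indicator (hQ.1 A hA)

lemma IsMeasPartition.exists_abs_le_of_forall_eq (hQ : IsMeasPartition Q)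
    (hG : ∀ A ∈ Q, ∀ x ∈ A, ∀ y ∈ A, G y = G x) : ∃ C, ∀ x, |G x| ≤ C := by
  obtain ⟨g, rfl⟩ := hQ.exists_eq_sum_indicator hG
  refine ⟨∑ A ∈ Q, |g A|, fun x => (Finset.abs_sum_le_sum_abs _ _).trans ?_⟩
  refine Finset.sum_le_sum fun A _ => ?_
  by_cases hx : x ∈ A <;> simp [hx]

lemma IsMeasPartition.forall_eq_of_joinCell (hP : IsMeasPartition P) {n : ℕ}
    (hG : ∀ x, ∀ y ∈ joinCell T P n x, G y = G x) :
    ∀ D ∈ joinPart T P n, ∀ x ∈ D, ∀ y ∈ D, G y = G x := fun D hD x hx y hy =>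
  hG x y (by rwa [hP.joinCell_eq_of_mem_joinPart hD hx])

lemma setIntegral_eq_measureReal_mul {s : Set α} {c : ℝ} (hs : MeasurableSet s)
    (h : ∀ x ∈ s, G x = c) : ∫ x in s, G x ∂μ = μ.real s * c := by
  rw [setIntegral_congr_fun hs h, setIntegral_const, smul_eq_mul]

lemma IsMeasPartition.integral_eq_sum_setIntegral_preimage (hQ : IsMeasPartition Q)
    (hT : Measurable T) (hG : Integrable G μ) :
    ∫ x, G x ∂μ = ∑ A ∈ Q, ∫ x in T ⁻¹' A, G x ∂μ := by
  have hcov : ⋃ A ∈ Q, T ⁻¹' A = Set.univ := by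
    rw [← Set.preimage_iUnion₂, hQ.2.2, Set.preimage_univ]
  rw [← setIntegral_univ, ← hcov]
  exact integral_biUnion_finset _ (fun A hA => (hQ.1 A hA).preimage hT)
    (fun A hA B hB hne => (hQ.2.1 A hA B hB hne).preimage T) fun _ _ => hG.integrableOn

lemma IsMeasPartition.integral_eq_sum_setIntegral (hQ : IsMeasPartition Q)
    (hG : Integrable G μ) : ∫ x, G x ∂μ = ∑ A ∈ Q, ∫ x in A, G x ∂μ :=
  hQ.integral_eq_sum_setIntegral_preimage measurable_id hG

lemma IsMeasPartition.integral_eq_sum [IsFiniteMeasure μ] (hQ : IsMeasPartition Q)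
    {g : Set α → ℝ} (hG : ∀ A ∈ Q, ∀ x ∈ A, G x = g A) :
    ∫ x, G x ∂μ = ∑ A ∈ Q, μ.real A * g A := by
  have hGi : Integrable G μ := hQ.integrable_of_forall_eq fun A hA x hx y hy => by
    rw [hG A hA x hx, hG A hA y hy]
  rw [hQ.integral_eq_sum_setIntegral hGi]
  exact Finset.sum_congr rfl fun A hA => setIntegral_eq_measureReal_mul (hQ.1 A hA) (hG A hA)

lemma IsMeasPartition.sum_measureReal_inter [IsFiniteMeasure μ] (hQ : IsMeasPartition Q)
    {s : Set α} (hs : MeasurableSet s) : ∑ A ∈ Q, μ.real (A ∩ s) = μ.real s := by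
  rw [← measureReal_biUnion_finset (fun A hA B hB hne => (hQ.2.1 A hA B hB hne).mono
    Set.inter_subset_left Set.inter_subset_left) fun A hA => (hQ.1 A hA).inter hs,
    ← Set.iUnion₂_inter, hQ.2.2, Set.univ_inter]

lemma IsMeasPartition.integral_div_measureReal_partCell_le [IsFiniteMeasure μ]
    (hQ : IsMeasPartition Q) {w : Set α → ℝ} (hw : ∀ A ∈ Q, 0 ≤ w A) :
    ∫ x, w (partCell Q x) / μ.real (partCell Q x) ∂μ ≤ ∑ A ∈ Q, w A := by
  rw [hQ.integral_eq_sum fun A hA x hx => by rw [hQ.partCell_eq hA hx]]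
  refine Finset.sum_le_sum fun A hA => ?_
  rcases eq_or_ne (μ.real A) 0 with h | h
  · simpa [h] using hw A hA
  · rw [mul_div_cancel₀ _ h]

end CellIntegrals

section Entropy

variable {α : Type*} [MeasurableSpace α] {μ : Measure α} {P Q : Finset (Set α)} {T : α → α}

lemma IsMeasPartition.ae_measure_joinCell_ne_zero (hP : IsMeasPartition P) :
    ∀ᵐ x ∂μ, ∀ n, μ (joinCell T P n x) ≠ 0 := by
  refine ae_all_iff.2 fun n => ae_iff.2 ?_
  have hsub : {x | ¬μ (joinCell T P n x) ≠ 0} ⊆ ⋃ D ∈ joinPart T P n, ⋃ (_ : μ D = 0), D :=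
    fun x hx => Set.mem_biUnion (hP.joinCell_mem_joinPart n x)
      (Set.mem_iUnion.2 ⟨not_not.1 hx, hP.mem_joinCell_self n x⟩)
  exact measure_mono_null hsub ((measure_biUnion_null_iff (Finset.countable_toSet _)).2
    fun D _ => measure_iUnion_null fun h => h)

lemma IsMeasPartition.joinCell_apply_eq (hP : IsMeasPartition P) {n : ℕ} {x y : α}
    (hy : y ∈ joinCell T P (n + 1) x) : joinCell T P n (T y) = joinCell T P n (T x) :=
  hP.joinCell_eq_of_mem (apply_mem_joinCell hy)

variable [IsProbabilityMeasure μ]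

lemma IsMeasPartition.sum_measureReal (hQ : IsMeasPartition Q) : ∑ A ∈ Q, μ.real A = 1 := by
  simpa using hQ.sum_measureReal_inter (μ := μ) MeasurableSet.univ

lemma partEntropy_nonneg (Q : Finset (Set α)) : 0 ≤ partEntropy μ Q :=
  Finset.sum_nonneg fun _ _ => Real.negMulLog_nonneg measureReal_nonneg measureReal_le_one

lemma IsMeasPartition.partEntropy_le_log_card (hQ : IsMeasPartition Q) :
    partEntropy μ Q ≤ Real.log Q.card := by
  rcases Q.eq_empty_or_nonempty with rfl | hne
  · simp [partEntropy]
  have hN : (0 : ℝ) < Q.card := by exact_mod_cast hne.card_pos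
  have hJensen := Real.concaveOn_negMulLog.le_map_sum (t := Q) (w := fun _ => (Q.card : ℝ)⁻¹)
    (p := fun A => μ.real A) (fun _ _ => by positivity) (by simp [hN.ne'])
    fun _ _ => Set.mem_Ici.2 measureReal_nonneg
  simp only [smul_eq_mul, ← Finset.mul_sum, hQ.sum_measureReal, mul_one, Real.negMulLog,
    Real.log_inv] at hJensen
  have : (Q.card : ℝ)⁻¹ * partEntropy μ Q ≤ (Q.card : ℝ)⁻¹ * Real.log Q.card := by
    simpa [partEntropy, Real.negMulLog, measureReal_def] using hJensen
  exact le_of_mul_le_mul_left this (by positivity)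

lemma IsMeasPartition.partEntropy_joinPart_le (hP : IsMeasPartition P) (hT : Measurable T)
    (n : ℕ) : partEntropy μ (joinPart T P n) ≤ n * Real.log P.card := by
  refine ((isMeasPartition_joinPart hP hT n).partEntropy_le_log_card).trans ?_
  rcases (joinPart T P n).card.eq_zero_or_pos with h | h
  · rw [h, Nat.cast_zero, Real.log_zero]
    exact mul_nonneg n.cast_nonneg (Real.log_natCast_nonneg _)
  rw [← Real.log_pow]
  exact Real.log_le_log (by exact_mod_cast h) (by exact_mod_cast card_joinPart_le n)

lemma IsMeasPartition.exists_partEntropy_succ_sub_le (hP : IsMeasPartition P)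
    (hT : Measurable T) {δ : ℝ} (hδ : 0 < δ) :
    ∃ m, partEntropy μ (joinPart T P (m + 1)) - partEntropy μ (joinPart T P m)
      ≤ ksEntropyPart T μ P + δ := by
  by_contra! h
  have hgrow : ∀ n : ℕ, n * (ksEntropyPart T μ P + δ) ≤ partEntropy μ (joinPart T P n) := by
    intro n
    induction n with
    | zero => simpa using partEntropy_nonneg _
    | succ n ih => push_cast; linarith [h n]
  -- `ksEntropyPart` is a real `limsup`, which is a junk value unless `H(Pⁿ)/n` is bounded above
  have hbdd : IsBoundedUnder (· ≤ ·) atTop fun n : ℕ => partEntropy μ (joinPart T P n) / n := by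
    refine isBoundedUnder_of ⟨Real.log P.card, fun n => ?_⟩
    rcases n.eq_zero_or_pos with rfl | hn
    · simpa using Real.log_natCast_nonneg _
    · rw [div_le_iff₀ (by positivity), mul_comm]
      exact hP.partEntropy_joinPart_le hT n
  have hle : ksEntropyPart T μ P + δ ≤ ksEntropyPart T μ P := by
    refine le_limsup_of_frequently_le (Eventually.frequently ?_) hbdd
    filter_upwards [eventually_gt_atTop 0] with n hn
    rw [le_div_iff₀ (by positivity), mul_comm]
    exact hgrow n
  linarith

lemma IsMeasPartition.integral_neg_log_measureReal_joinCell (hP : IsMeasPartition P)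
    (hT : Measurable T) (n : ℕ) :
    ∫ x, -Real.log (μ.real (joinCell T P n x)) ∂μ = partEntropy μ (joinPart T P n) := by
  rw [(isMeasPartition_joinPart hP hT n).integral_eq_sum (g := fun D => -Real.log (μ.real D))
    fun D hD x hx => by rw [hP.joinCell_eq_of_mem_joinPart hD hx]]
  simp [partEntropy, Real.negMulLog, measureReal_def]

lemma IsMeasPartition.measureReal_joinCell_add_le (hP : IsMeasPartition P)
    (hT : MeasurePreserving T μ μ) (k n : ℕ) (x : α) :
    μ.real (joinCell T P (k + n) x) ≤ μ.real (joinCell T P n (T^[k] x)) := by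
  rw [← (hT.iterate k).measureReal_preimage
    (hP.measurableSet_joinCell hT.measurable n _).nullMeasurableSet]
  exact measureReal_mono (joinCell_add_subset_preimage k n x)

end Entropy

section Markov

variable {α : Type*} [MeasurableSpace α] {μ : Measure α} {P : Finset (Set α)} {T : α → α}

/-- The conditional information `I(P ∣ T⁻¹ Pᵐ)`, where `Pᵐ = joinPart T P m`. On null cells it is
`0`, because `Real.log 0 = 0`. -/
noncomputable def condInfo (T : α → α) (P : Finset (Set α)) (μ : Measure α) (m : ℕ) (x : α) : ℝ :=
  -Real.log (μ.real (joinCell T P (m + 1) x) / μ.real (joinCell T P m (T x)))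

/-- The mass of the cell `joinCell T P (m + l) x` under the `m`-step Markov approximation
of `μ`. -/
noncomputable def markovWeight (T : α → α) (P : Finset (Set α)) (μ : Measure α) (m l : ℕ)
    (x : α) : ℝ :=
  Real.exp (-birkhoffSum T (condInfo T P μ m) l x) * μ.real (joinCell T P m (T^[l] x))

lemma IsMeasPartition.condInfo_eq_of_mem (hP : IsMeasPartition P) {m : ℕ} {x y : α}
    (hy : y ∈ joinCell T P (m + 1) x) : condInfo T P μ m y = condInfo T P μ m x := by
  rw [condInfo, condInfo, hP.joinCell_eq_of_mem hy, hP.joinCell_apply_eq hy]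

lemma markovWeight_nonneg (m l : ℕ) (x : α) : 0 ≤ markovWeight T P μ m l x :=
  mul_nonneg (Real.exp_nonneg _) measureReal_nonneg

lemma markovWeight_zero (m : ℕ) (x : α) :
    markovWeight T P μ m 0 x = μ.real (joinCell T P m x) := by
  simp [markovWeight]

lemma markovWeight_succ (m l : ℕ) (x : α) :
    markovWeight T P μ m (l + 1) x =
      Real.exp (-condInfo T P μ m x) * markovWeight T P μ m l (T x) := by
  rw [markovWeight, markovWeight, birkhoffSum_succ', neg_add, Real.exp_add,
    Function.iterate_succ_apply, mul_assoc]

lemma IsMeasPartition.markovWeight_eq_of_mem (hP : IsMeasPartition P) {m l : ℕ} {x y : α}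
    (hy : y ∈ joinCell T P (m + l) x) : markovWeight T P μ m l y = markovWeight T P μ m l x := by
  induction l generalizing x y with
  | zero => rw [markovWeight_zero, markovWeight_zero, hP.joinCell_eq_of_mem (n := m) hy]
  | succ l ih =>
    rw [markovWeight_succ, markovWeight_succ, hP.condInfo_eq_of_mem (joinCell_anti (by omega) x hy),
      ih (apply_mem_joinCell hy)]

variable [IsProbabilityMeasure μ]

lemma IsMeasPartition.measureReal_joinCell_succ_le (hP : IsMeasPartition P)
    (hT : MeasurePreserving T μ μ) (m : ℕ) (x : α) :
    μ.real (joinCell T P (m + 1) x) ≤ μ.real (joinCell T P m (T x)) := by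
  simpa [add_comm] using hP.measureReal_joinCell_add_le hT 1 m x

lemma IsMeasPartition.condInfo_nonneg (hP : IsMeasPartition P) (hT : MeasurePreserving T μ μ)
    (m : ℕ) (x : α) : 0 ≤ condInfo T P μ m x :=
  neg_nonneg.2 <| Real.log_nonpos (div_nonneg measureReal_nonneg measureReal_nonneg)
    (div_le_one_of_le₀ (hP.measureReal_joinCell_succ_le hT m x) measureReal_nonneg)

lemma IsMeasPartition.exp_neg_condInfo (hP : IsMeasPartition P) (hT : MeasurePreserving T μ μ)
    {m : ℕ} {x : α} (hx : 0 < μ.real (joinCell T P (m + 1) x)) :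
    Real.exp (-condInfo T P μ m x) =
      μ.real (joinCell T P (m + 1) x) / μ.real (joinCell T P m (T x)) := by
  rw [condInfo, neg_neg, Real.exp_log
    (div_pos hx (hx.trans_le (hP.measureReal_joinCell_succ_le hT m x)))]

lemma IsMeasPartition.integral_condInfo (hP : IsMeasPartition P) (hT : MeasurePreserving T μ μ)
    (m : ℕ) : ∫ x, condInfo T P μ m x ∂μ =
      partEntropy μ (joinPart T P (m + 1)) - partEntropy μ (joinPart T P m) := by
  have hcell : ∀ n, ∀ x, ∀ y ∈ joinCell T P n x,
      -Real.log (μ.real (joinCell T P n y)) = -Real.log (μ.real (joinCell T P n x)) :=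
    fun n x y hy => by rw [hP.joinCell_eq_of_mem hy]
  have hint : ∀ n, Integrable (fun x => -Real.log (μ.real (joinCell T P n x))) μ := fun n =>
    (isMeasPartition_joinPart hP hT.measurable n).integrable_of_forall_eq
      (hP.forall_eq_of_joinCell (hcell n))
  have hae : condInfo T P μ m =ᵐ[μ] fun x =>
      -Real.log (μ.real (joinCell T P (m + 1) x)) - -Real.log (μ.real (joinCell T P m (T x))) := by
    filter_upwards [hP.ae_measure_joinCell_ne_zero] with x hx
    have h1 : 0 < μ.real (joinCell T P (m + 1) x) := ENNReal.toReal_pos (hx _) (measure_ne_top μ _)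
    rw [condInfo, Real.log_div h1.ne' (h1.trans_le (hP.measureReal_joinCell_succ_le hT m x)).ne']
    ring
  have hintT : Integrable (fun x => -Real.log (μ.real (joinCell T P m (T x)))) μ :=
    hT.integrable_comp_of_integrable (hint m)
  have hmeas := (isMeasPartition_joinPart hP hT.measurable m).measurable_of_forall_eq
    (hP.forall_eq_of_joinCell (hcell m))
  rw [integral_congr_ae hae, integral_sub (hint _) hintT, hT.integral_comp_of_measurable hmeas,
    hP.integral_neg_log_measureReal_joinCell hT.measurable,
    hP.integral_neg_log_measureReal_joinCell hT.measurable]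

lemma IsMeasPartition.integrable_markovWeight_div (hP : IsMeasPartition P) (hT : Measurable T)
    (m l : ℕ) :
    Integrable (fun x => markovWeight T P μ m l x / μ.real (joinCell T P (m + l) x)) μ :=
  (isMeasPartition_joinPart hP hT (m + l)).integrable_of_forall_eq
    (hP.forall_eq_of_joinCell fun _ _ hy => by
      rw [hP.markovWeight_eq_of_mem hy, hP.joinCell_eq_of_mem hy])

/-- On the fibre `T⁻¹ D` over a cell `D` of `joinPart T P (m + l)`, the Markov weight splits the
weight of `D` among the cells `A ∩ T⁻¹ D`, `A ∈ P`, in the proportions `μ(A ∩ T⁻¹ E) / μ(E)`, where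
`E ⊇ D` is a cell of `joinPart T P m`; these proportions sum to one. -/
lemma IsMeasPartition.setIntegral_markovWeight_succ_div_le (hP : IsMeasPartition P)
    (hT : MeasurePreserving T μ μ) (m l : ℕ) (y : α) :
    ∫ x in T ⁻¹' joinCell T P (m + l) y,
      markovWeight T P μ m (l + 1) x / μ.real (joinCell T P (m + (l + 1)) x) ∂μ
      ≤ markovWeight T P μ m l y := by
  set B := T ⁻¹' joinCell T P (m + l) y
  set E := joinCell T P m y
  have hB : MeasurableSet B := (hP.measurableSet_joinCell hT.measurable _ _).preimage hT.measurable
  have hE : MeasurableSet E := hP.measurableSet_joinCell hT.measurable _ _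
  set w : Set α → ℝ := fun A => μ.real (A ∩ T ⁻¹' E) / μ.real E * markovWeight T P μ m l y
  have hfiber : ∀ x ∈ B, markovWeight T P μ m (l + 1) x / μ.real (joinCell T P (m + (l + 1)) x)
      = w (partCell P x) / (μ.restrict B).real (partCell P x) := by
    intro x hx
    have hcell : joinCell T P (m + (l + 1)) x = partCell P x ∩ B := by
      rw [← add_assoc, joinCell_succ, hP.joinCell_eq_of_mem hx]
    have hcellm : joinCell T P m (T x) = E := hP.joinCell_eq_of_mem (joinCell_anti (by omega) y hx)
    rw [measureReal_restrict_apply (hP.1 _ (hP.partCell_mem x)), ← hcell, markovWeight_succ,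
      hP.markovWeight_eq_of_mem hx]
    rcases (measureReal_nonneg (μ := μ) (s := joinCell T P (m + (l + 1)) x)).eq_or_lt with h0 | hpos
    · simp [← h0]
    · rw [hP.exp_neg_condInfo hT (hpos.trans_le (measureReal_mono (joinCell_anti (by omega) x))),
        joinCell_succ, hcellm]
  calc _ = ∫ x in B, w (partCell P x) / (μ.restrict B).real (partCell P x) ∂μ :=
        setIntegral_congr_fun hB hfiber
    _ ≤ ∑ A ∈ P, w A :=
        hP.integral_div_measureReal_partCell_le fun A _ =>
          mul_nonneg (div_nonneg measureReal_nonneg measureReal_nonneg) (markovWeight_nonneg m l y)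
    _ = μ.real E / μ.real E * markovWeight T P μ m l y := by
        simp_rw [w, ← Finset.sum_mul, ← Finset.sum_div,
          hP.sum_measureReal_inter (hE.preimage hT.measurable),
          hT.measureReal_preimage hE.nullMeasurableSet]
    _ ≤ markovWeight T P μ m l y :=
        mul_le_of_le_one_left (markovWeight_nonneg m l y) (div_self_le_one _)

lemma IsMeasPartition.integral_markovWeight_succ_div_le (hP : IsMeasPartition P)
    (hT : MeasurePreserving T μ μ) (m l : ℕ) :
    ∫ x, markovWeight T P μ m (l + 1) x / μ.real (joinCell T P (m + (l + 1)) x) ∂μ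
      ≤ ∫ x, markovWeight T P μ m l x / μ.real (joinCell T P (m + l) x) ∂μ := by
  have hQ := isMeasPartition_joinPart hP hT.measurable (m + l)
  rw [hQ.integral_eq_sum_setIntegral_preimage hT.measurable
      (hP.integrable_markovWeight_div hT.measurable m (l + 1)),
    hQ.integral_eq_sum_setIntegral (hP.integrable_markovWeight_div hT.measurable m l)]
  refine Finset.sum_le_sum fun D hD => ?_
  rcases D.eq_empty_or_nonempty with rfl | ⟨y, hy⟩
  · simp
  rw [← hP.joinCell_eq_of_mem_joinPart hD hy,
    setIntegral_eq_measureReal_mul (hP.measurableSet_joinCell hT.measurable _ _) fun x hx => by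
      rw [hP.markovWeight_eq_of_mem hx, hP.joinCell_eq_of_mem hx]]
  rcases eq_or_ne (μ.real (joinCell T P (m + l) y)) 0 with h0 | h0
  · have hnull : μ (T ⁻¹' joinCell T P (m + l) y) = 0 := by
      rw [hT.measure_preimage (hP.measurableSet_joinCell hT.measurable _ _).nullMeasurableSet]
      exact (measureReal_eq_zero_iff).1 h0
    rw [h0, zero_mul, Measure.restrict_eq_zero.2 hnull, integral_zero_measure]
  · rw [mul_div_cancel₀ _ h0]
    exact hP.setIntegral_markovWeight_succ_div_le hT m l y

theorem IsMeasPartition.integral_markovWeight_div_le_one (hP : IsMeasPartition P)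
    (hT : MeasurePreserving T μ μ) (m l : ℕ) :
    ∫ x, markovWeight T P μ m l x / μ.real (joinCell T P (m + l) x) ∂μ ≤ 1 := by
  induction l with
  | zero =>
    calc _ ≤ ∫ _x, (1 : ℝ) ∂μ :=
          integral_mono (hP.integrable_markovWeight_div hT.measurable m 0) (integrable_const 1)
            fun x => by simpa [markovWeight_zero] using div_self_le_one _
      _ = 1 := by simp
  | succ l ih => exact (hP.integral_markovWeight_succ_div_le hT m l).trans ih

end Markov

section ShannonMcMillanBreiman

variable {α : Type*} [MeasurableSpace α] {μ : Measure α} {P : Finset (Set α)} {T : α → α}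

lemma negLogMeas_anti [IsFiniteMeasure μ] {s t : Set α} (h : s ⊆ t) :
    negLogMeas μ t ≤ negLogMeas μ s := by
  unfold negLogMeas
  split_ifs with ht hs hs
  · exact le_rfl
  · exact absurd (measure_mono_null h ht) hs
  · exact le_top
  · exact ENNReal.ofReal_le_ofReal (neg_le_neg (Real.log_le_log
      (ENNReal.toReal_pos hs (measure_ne_top μ _)) (measureReal_mono h)))

lemma negLogMeas_div_le_ofReal {s : Set α} {n : ℕ} {b : ℝ} (hn : 0 < n) (hs : μ s ≠ 0)
    (h : -Real.log (μ.real s) ≤ n * b) : negLogMeas μ s / n ≤ ENNReal.ofReal b := by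
  have hn' : (0 : ℝ) < n := by exact_mod_cast hn
  rw [negLogMeas, if_neg hs, ← measureReal_def, ← ENNReal.ofReal_natCast,
    ← ENNReal.ofReal_div_of_pos hn']
  exact ENNReal.ofReal_le_ofReal ((div_le_iff₀ hn').2 (by linarith))

variable [IsProbabilityMeasure μ]

lemma IsMeasPartition.measure_measureReal_joinCell_lt_le (hP : IsMeasPartition P)
    (hT : MeasurePreserving T μ μ) (m l : ℕ) {c : ℝ} (hc : 0 < c) :
    μ {x | μ.real (joinCell T P (m + l) x) < c * markovWeight T P μ m l x} ≤ ENNReal.ofReal c := by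
  set Φ := fun x => markovWeight T P μ m l x / μ.real (joinCell T P (m + l) x)
  have hsub : {x | μ.real (joinCell T P (m + l) x) < c * markovWeight T P μ m l x} ⊆
      {x | c⁻¹ ≤ Φ x} ∪ {x | ¬∀ n, μ (joinCell T P n x) ≠ 0} := by
    intro x hx
    by_cases h0 : μ (joinCell T P (m + l) x) = 0
    · exact Or.inr fun h => h _ h0
    · refine Or.inl ?_
      exact (le_div_iff₀ (ENNReal.toReal_pos h0 (measure_ne_top μ _))).2
        ((inv_mul_le_iff₀ hc).2 (le_of_lt hx))
  have hmarkov : c⁻¹ * μ.real {x | c⁻¹ ≤ Φ x} ≤ 1 :=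
    (mul_meas_ge_le_integral_of_nonneg
      (ae_of_all _ fun x => div_nonneg (markovWeight_nonneg m l x) measureReal_nonneg)
      (hP.integrable_markovWeight_div hT.measurable m l) c⁻¹).trans
      (hP.integral_markovWeight_div_le_one hT m l)
  calc _ ≤ μ ({x | c⁻¹ ≤ Φ x} ∪ {x | ¬∀ n, μ (joinCell T P n x) ≠ 0}) := measure_mono hsub
    _ ≤ μ {x | c⁻¹ ≤ Φ x} := by
        refine (measure_union_le _ _).trans_eq ?_
        rw [ae_iff.1 hP.ae_measure_joinCell_ne_zero, add_zero]
    _ ≤ ENNReal.ofReal c := by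
        rw [← ENNReal.ofReal_toReal (measure_ne_top μ _)]
        refine ENNReal.ofReal_le_ofReal ?_
        rwa [inv_mul_le_iff₀ hc, mul_one] at hmarkov

lemma IsMeasPartition.ae_eventually_exp_mul_markovWeight_le (hP : IsMeasPartition P)
    (hT : MeasurePreserving T μ μ) (m : ℕ) {δ : ℝ} (hδ : 0 < δ) :
    ∀ᵐ x ∂μ, ∀ᶠ l : ℕ in atTop,
      Real.exp (-(δ * l)) * markovWeight T P μ m l x ≤ μ.real (joinCell T P (m + l) x) := by
  have hgeom : ∀ l : ℕ, ENNReal.ofReal (Real.exp (-(δ * l))) =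
      ENNReal.ofReal (Real.exp (-δ)) ^ l := fun l => by
    rw [← ENNReal.ofReal_pow (Real.exp_nonneg _), ← Real.exp_nat_mul]
    ring_nf
  have hsum : ∑' l : ℕ, μ {x | μ.real (joinCell T P (m + l) x) <
      Real.exp (-(δ * l)) * markovWeight T P μ m l x} ≠ ⊤ := by
    refine ne_top_of_le_ne_top ?_ (ENNReal.tsum_le_tsum fun l =>
      hP.measure_measureReal_joinCell_lt_le hT m l (Real.exp_pos _))
    simp_rw [hgeom, ENNReal.tsum_geometric]
    exact ENNReal.inv_ne_top.2 (tsub_pos_of_lt (ENNReal.ofReal_lt_one.2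
      (Real.exp_lt_one_iff.2 (neg_neg_of_pos hδ)))).ne'
  filter_upwards [ae_eventually_notMem hsum] with x hx
  exact hx.mono fun l hl => not_lt.1 hl

lemma IsMeasPartition.neg_log_measureReal_joinCell_le (hP : IsMeasPartition P)
    (hT : MeasurePreserving T μ μ) {m l : ℕ} {δ C : ℝ} (hδ : 0 ≤ δ) {x : α}
    (hC : ∀ y, -Real.log (μ.real (joinCell T P m y)) ≤ C)
    (hpos : 0 < μ.real (joinCell T P (m + l) x))
    (hx : Real.exp (-(δ * l)) * markovWeight T P μ m l x ≤ μ.real (joinCell T P (m + l) x)) :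
    -Real.log (μ.real (joinCell T P (m + l) x)) ≤
      δ * (m + l : ℕ) + birkhoffSum T (condInfo T P μ m) (m + l) x + C := by
  have hmpos : 0 < μ.real (joinCell T P m (T^[l] x)) :=
    hpos.trans_le (by simpa [add_comm] using hP.measureReal_joinCell_add_le hT l m x)
  rw [markovWeight, ← mul_assoc, ← Real.exp_add] at hx
  have hlog := Real.log_le_log (mul_pos (Real.exp_pos _) hmpos) hx
  rw [Real.log_mul (Real.exp_pos _).ne' hmpos.ne', Real.log_exp] at hlog
  have hsum : birkhoffSum T (condInfo T P μ m) l x ≤ birkhoffSum T (condInfo T P μ m) (m + l) x :=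
    Finset.sum_le_sum_of_subset_of_nonneg (Finset.range_subset_range.2 (by omega))
      fun k _ _ => hP.condInfo_nonneg hT m _
  have hδl : δ * l ≤ δ * (m + l : ℕ) :=
    mul_le_mul_of_nonneg_left (by exact_mod_cast Nat.le_add_left l m) hδ
  linarith [hC (T^[l] x)]

lemma IsMeasPartition.ae_limsup_negLogMeas_joinCell_le_add (hP : IsMeasPartition P)
    (hμ : Ergodic T μ) (m : ℕ) {δ : ℝ} (hδ : 0 < δ) :
    ∀ᵐ x ∂μ, limsup (fun n => negLogMeas μ (joinCell T P n x) / n) atTop ≤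
      ENNReal.ofReal (∫ x, condInfo T P μ m x ∂μ + 3 * δ) := by
  have hT := hμ.toMeasurePreserving
  have hcell : ∀ x, ∀ y ∈ joinCell T P m x,
      -Real.log (μ.real (joinCell T P m y)) = -Real.log (μ.real (joinCell T P m x)) :=
    fun x y hy => by rw [hP.joinCell_eq_of_mem hy]
  obtain ⟨C, hC⟩ := (isMeasPartition_joinPart hP hT.measurable m).exists_abs_le_of_forall_eq
    (hP.forall_eq_of_joinCell hcell)
  have hinfo := isMeasPartition_joinPart hP hT.measurable (m + 1)
  have hinfo' := hP.forall_eq_of_joinCell (G := condInfo T P μ m) (n := m + 1) fun x y hy =>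
    hP.condInfo_eq_of_mem hy
  obtain ⟨C', hC'⟩ := hinfo.exists_abs_le_of_forall_eq hinfo'
  filter_upwards [hP.ae_measure_joinCell_ne_zero, hP.ae_eventually_exp_mul_markovWeight_le hT m hδ,
    hμ.ae_limsup_birkhoffAverage_le_integral (hinfo.measurable_of_forall_eq hinfo') hC']
    with x hx0 hxM hxB
  have havg : ∀ᶠ n in atTop,
      birkhoffAverage ℝ T (condInfo T P μ m) n x < ∫ x, condInfo T P μ m x ∂μ + δ :=
    eventually_lt_of_limsup_lt (hxB.trans_lt (lt_add_of_pos_right _ hδ))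
      (isBoundedUnder_of ⟨C', fun n => (le_abs_self _).trans (abs_birkhoffAverage_le hC' n x)⟩)
  have hCn : ∀ᶠ n : ℕ in atTop, C ≤ δ * n :=
    (tendsto_natCast_atTop_atTop.const_mul_atTop hδ).eventually_ge_atTop C
  refine limsup_le_of_le (by isBoundedDefault) ?_
  filter_upwards [havg, hCn, (tendsto_sub_atTop_nat m).eventually hxM, eventually_gt_atTop m]
    with n havg hCn hM hnm
  obtain ⟨l, rfl⟩ : ∃ l, n = m + l := ⟨n - m, by omega⟩
  rw [Nat.add_sub_cancel_left] at hM
  have hkey := hP.neg_log_measureReal_joinCell_le hT hδ.le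
    (fun y => (le_abs_self _).trans (hC y)) (ENNReal.toReal_pos (hx0 _) (measure_ne_top μ _)) hM
  rw [birkhoffAverage, smul_eq_mul, inv_mul_lt_iff₀ (by exact_mod_cast hnm.trans_le' m.zero_le)]
    at havg
  exact negLogMeas_div_le_ofReal (by omega) (hx0 _) (by linarith)

lemma IsMeasPartition.ae_limsup_negLogMeas_joinCell_le_integral_condInfo
    (hP : IsMeasPartition P) (hμ : Ergodic T μ) (m : ℕ) :
    ∀ᵐ x ∂μ, limsup (fun n => negLogMeas μ (joinCell T P n x) / n) atTop ≤
      ENNReal.ofReal (∫ x, condInfo T P μ m x ∂μ) := by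
  filter_upwards [ae_all_iff.2 fun j : ℕ =>
    hP.ae_limsup_negLogMeas_joinCell_le_add hμ m (Nat.one_div_pos_of_nat (n := j))] with x hx
  have hlim : Tendsto (fun j : ℕ => ∫ x, condInfo T P μ m x ∂μ + 3 * (1 / ((j : ℝ) + 1))) atTop
      (𝓝 (∫ x, condInfo T P μ m x ∂μ)) := by
    simpa using tendsto_const_nhds.add
      ((tendsto_one_div_add_atTop_nhds_zero_nat (𝕜 := ℝ)).const_mul 3)
  exact ge_of_tendsto' (ENNReal.tendsto_ofReal hlim) hx

/-- The upper half of the Shannon–McMillan–Breiman theorem. -/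
theorem IsMeasPartition.ae_limsup_negLogMeas_joinCell_le_ksEntropyPart (hP : IsMeasPartition P)
    (hμ : Ergodic T μ) :
    ∀ᵐ x ∂μ, limsup (fun n => negLogMeas μ (joinCell T P n x) / n) atTop ≤
      ENNReal.ofReal (ksEntropyPart T μ P) := by
  have hT := hμ.toMeasurePreserving
  filter_upwards [ae_all_iff.2 fun m => hP.ae_limsup_negLogMeas_joinCell_le_integral_condInfo hμ m]
    with x hx
  have hlim : Tendsto (fun j : ℕ => ksEntropyPart T μ P + 1 / ((j : ℝ) + 1)) atTop
      (𝓝 (ksEntropyPart T μ P)) := by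
    simpa using tendsto_const_nhds.add (tendsto_one_div_add_atTop_nhds_zero_nat (𝕜 := ℝ))
  refine ge_of_tendsto' (ENNReal.tendsto_ofReal hlim) fun j => ?_
  obtain ⟨m, hm⟩ := hP.exists_partEntropy_succ_sub_le (μ := μ) hT.measurable
    (Nat.one_div_pos_of_nat (n := j))
  exact (hx m).trans (ENNReal.ofReal_le_ofReal (by rwa [hP.integral_condInfo hT]))

end ShannonMcMillanBreiman

lemma IsMeasPartition.joinCell_subset_bowenBall [MeasurableSpace X] {T : X → X}
    {P : Finset (Set X)} (hP : IsMeasPartition P) {ε : ℝ} (hε : 0 < ε)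
    (hdiam : ∀ A ∈ P, Metric.ediam A ≤ ENNReal.ofReal ε) (n : ℕ) (x : X) :
    joinCell T P n x ⊆ bowenBall T n x (2 * ε) := by
  intro y hy
  have hle : bowenDist T n x y ≤ ε := by
    refine Real.iSup_le (fun j => Real.iSup_le (fun hj => ?_) hε.le) hε.le
    have hedist := (Metric.edist_le_ediam_of_mem (hP.mem_partCell _)
      (hy j (Finset.mem_range.1 hj))).trans (hdiam _ (hP.partCell_mem _))
    rwa [edist_dist, ENNReal.ofReal_le_ofReal_iff hε.le] at hedist
  exact hle.trans_lt (by linarith)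

theorem stmt_4_general {X : Type*} [MetricSpace X] [MeasurableSpace X]
    (T : X → X) (μ : Measure X) [IsProbabilityMeasure μ]
    (hμ : Ergodic T μ) (ε : ℝ) (hε : 0 < ε) :
    bkUpper T μ (2 * ε) ≤
      ⨅ (P : Finset (Set X)) (_ : IsMeasPartition P ∧
        ∀ A ∈ P, EMetric.diam A ≤ ENNReal.ofReal ε),
        ENNReal.ofReal (ksEntropyPart T μ P) := by
  refine le_iInf₂ fun P ⟨hP, hdiam⟩ => ?_
  calc bkUpper T μ (2 * ε)
      ≤ ∫⁻ _, ENNReal.ofReal (ksEntropyPart T μ P) ∂μ := by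
        refine lintegral_mono_ae ?_
        filter_upwards [hP.ae_limsup_negLogMeas_joinCell_le_ksEntropyPart hμ] with x hx
        refine (limsup_le_limsup (Eventually.of_forall fun n => ?_)).trans hx
        exact ENNReal.div_le_div_right
          (negLogMeas_anti (hP.joinCell_subset_bowenBall hε hdiam n x)) _
    _ = ENNReal.ofReal (ksEntropyPart T μ P) := by simp

/-- `h̄_μ^{BK}(T, 2ε) ≤ inf_{diam(P) ≤ ε} h_μ(T,P)` for ergodic `μ`. -/
theorem stmt_4 {X : Type*} [MetricSpace X] [CompactSpace X] [MeasurableSpace X] [BorelSpace X]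
    (T : X → X) (hT : Continuous T) (μ : Measure X) [IsProbabilityMeasure μ]
    (hμ : Ergodic T μ) (ε : ℝ) (hε : 0 < ε) :
    bkUpper T μ (2 * ε) ≤
      ⨅ (P : Finset (Set X)) (_ : IsMeasPartition P ∧
        ∀ A ∈ P, EMetric.diam A ≤ ENNReal.ofReal ε),
        ENNReal.ofReal (ksEntropyPart T μ P) :=
  stmt_4_general T μ hμ ε hε
end

section
/- Let (X,T) be a TDS with metric d and μ an ergodic T-invariant Borel probability measure. Then for every ε > 0, the upper Katok ε-entropy satisfies h̄_μ^K(T, 2ε) ≤ h̄_μ^{BK}(T, ε), where h̄_μ^K(T,2ε) = lim_{δ→0} limsup_n (1/n) log R_μ^δ(T,n,2ε). -/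
open MeasureTheory Filter Set Metric Topology ENNReal

variable {X : Type*} [MetricSpace X]

/-!
Write `h(x) = limsup_n -(1/n) log μ(B_n(x,ε))`. Since `T` maps `B_{n+1}(x,ε)` into `B_n(Tx,ε)` and
preserves `μ`, `h(Tx) ≤ h(x)`; by ergodicity `h` is a.e. constant, so its essential supremum is
at most `∫ h dμ`. If `h < s` a.e., then for large `N` the points `x` with
`μ(B_n(x,ε)) ≥ e^{-sn}` for all `n ≥ N` fill measure `> 1 - δ`. Among them, a maximal family with
pairwise disjoint `ε`-balls has at most `e^{sn}` elements, and the `2ε`-balls around it cover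
them, so `R_μ^δ(T,n,2ε) ≤ e^{sn}`.
-/

section BowenBall

variable {T : X → X} {n : ℕ} {x y : X} {ε : ℝ}

lemma mem_bowenBall (hε : 0 < ε) :
    y ∈ bowenBall T n x ε ↔ ∀ j < n, dist (T^[j] x) (T^[j] y) < ε := by
  rcases Nat.eq_zero_or_pos n with rfl | hn
  · simp [bowenBall, bowenDist, hε]
  · have hne : ∃ j ∈ (Finset.range n : Set ℕ), sSup ∅ ≤ dist (T^[j] x) (T^[j] y) :=
      ⟨0, by simpa using hn, by simp [dist_nonneg]⟩
    simpa [bowenBall, bowenDist] using (Finset.range n).finite_toSet.ciSup_lt_iff hne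

lemma isOpen_bowenBall (hT : Continuous T) (hε : 0 < ε) : IsOpen (bowenBall T n x ε) := by
  have : bowenBall T n x ε = ⋂ j ∈ Finset.range n, {y | dist (T^[j] x) (T^[j] y) < ε} := by
    ext y
    simp [mem_bowenBall hε]
  rw [this]
  exact isOpen_biInter_finset fun j _ ↦
    isOpen_lt (continuous_const.dist (hT.iterate j)) continuous_const

lemma bowenBall_succ_subset_preimage (hε : 0 < ε) :
    bowenBall T (n + 1) x ε ⊆ T ⁻¹' bowenBall T n (T x) ε := by
  intro y hy
  rw [mem_preimage, mem_bowenBall hε]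
  intro j hj
  simpa only [Function.iterate_succ_apply] using (mem_bowenBall hε).1 hy (j + 1) (by omega)

lemma mem_bowenBall_two_mul_of_not_disjoint (hε : 0 < ε) {z : X}
    (h : ¬Disjoint (bowenBall T n x ε) (bowenBall T n z ε)) :
    z ∈ bowenBall T n x (2 * ε) := by
  obtain ⟨w, hwx, hwz⟩ := not_disjoint_iff.1 h
  rw [mem_bowenBall (by positivity)]
  intro j hj
  have hx := (mem_bowenBall hε).1 hwx j hj
  have hz := (mem_bowenBall hε).1 hwz j hj
  linarith [dist_triangle_right (T^[j] x) (T^[j] z) (T^[j] w)]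

lemma measurable_measure_bowenBall [MeasurableSpace X] [BorelSpace X] [SecondCountableTopology X]
    (μ : Measure X) [SFinite μ] (hT : Continuous T) (hε : 0 < ε) :
    Measurable fun x ↦ μ (bowenBall T n x ε) := by
  have hopen : IsOpen (⋂ j ∈ Finset.range n, {p : X × X | dist (T^[j] p.1) (T^[j] p.2) < ε}) :=
    isOpen_biInter_finset fun j _ ↦ isOpen_lt
      (((hT.iterate j).comp continuous_fst).dist ((hT.iterate j).comp continuous_snd))
      continuous_const
  convert measurable_measure_prodMk_left (ν := μ) hopen.measurableSet using 3 with x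
  ext y
  simp [mem_bowenBall hε]

end BowenBall

theorem ENNReal.limsup_div_natCast_le_of_le_succ {a b : ℕ → ℝ≥0∞} (h : ∀ n, b n ≤ a (n + 1)) :
    limsup (fun n ↦ b n / n) atTop ≤ limsup (fun n ↦ a n / n) atTop := by
  set r : ℕ → ℝ≥0∞ := fun n ↦ ((n + 1 : ℕ) : ℝ≥0∞) / n
  have hr : Tendsto r atTop (𝓝 1) := by
    have h1 : Tendsto (fun n : ℕ ↦ 1 + (n : ℝ≥0∞)⁻¹) atTop (𝓝 1) := by
      simpa using ENNReal.tendsto_inv_nat_nhds_zero.const_add 1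
    refine h1.congr' ((eventually_ne_atTop 0).mono fun n hn ↦ ?_)
    simp only [r, Nat.cast_succ, ENNReal.add_div, one_div,
      ENNReal.div_self (Nat.cast_ne_zero.2 hn) (ENNReal.natCast_ne_top n)]
  have hb : ∀ n, b n / n ≤ (a (n + 1) / (n + 1 : ℕ)) * r n := fun n ↦ by
    have hm : ((n + 1 : ℕ) : ℝ≥0∞) ≠ 0 := Nat.cast_ne_zero.2 n.succ_ne_zero
    rw [div_eq_mul_inv _ ((n + 1 : ℕ) : ℝ≥0∞), mul_assoc, ← mul_div_assoc,
      ENNReal.inv_mul_cancel hm (ENNReal.natCast_ne_top _), one_div, ← div_eq_mul_inv]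
    exact ENNReal.div_le_div_right (h n) _
  calc limsup (fun n ↦ b n / n) atTop
      ≤ limsup ((fun n ↦ a (n + 1) / (n + 1 : ℕ)) * r) atTop :=
        limsup_le_limsup (.of_forall hb)
    _ ≤ limsup (fun n ↦ a (n + 1) / (n + 1 : ℕ)) atTop * limsup r atTop :=
        ENNReal.limsup_mul_le' (.inr (by simp [hr.limsup_eq])) (.inr (by simp [hr.limsup_eq]))
    _ = limsup (fun n ↦ a n / n) atTop := by
        rw [hr.limsup_eq, mul_one]
        exact limsup_nat_add (fun n ↦ a n / n) 1

theorem Ergodic.essSup_le_lintegral_of_comp_le {α : Type*} [MeasurableSpace α] {T : α → α}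
    {μ : Measure α} [IsProbabilityMeasure μ] (hμ : Ergodic T μ) {f : α → ℝ≥0∞}
    (hf : Measurable f) (hfT : ∀ x, f (T x) ≤ f x) : essSup f μ ≤ ∫⁻ x, f x ∂μ := by
  refine le_of_forall_lt_imp_le_of_dense fun d hd ↦ ?_
  obtain ⟨d', hdd', hd'⟩ := exists_between hd
  have hsub : {x | f x ≤ d'} ⊆ T ⁻¹' {x | f x ≤ d'} := fun x hx ↦ (hfT x).trans hx
  rcases hμ.ae_empty_or_univ_of_ae_le_preimage
    (measurableSet_le hf measurable_const).nullMeasurableSet hsub.eventuallyLE with h | h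
  · have hlt : ∀ᵐ x ∂μ, d' < f x := by
      simpa using (measure_eq_zero_iff_ae_notMem.1 (ae_eq_empty.1 h))
    calc d ≤ d' := hdd'.le
      _ = ∫⁻ _, d' ∂μ := by simp
      _ ≤ ∫⁻ x, f x ∂μ := lintegral_mono_ae (hlt.mono fun x hx ↦ hx.le)
  · exact absurd (essSup_le_of_ae_le d' (eventuallyEq_univ.1 h)) hd'.not_ge

lemma negLogMeas_le_negLogMeas {α : Type*} [MeasurableSpace α] (μ : Measure α) {S S' : Set α}
    (hS' : μ S' ≠ ∞) (h : μ S ≤ μ S') : negLogMeas μ S' ≤ negLogMeas μ S := by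
  by_cases hS : μ S = 0
  · simp [negLogMeas, hS]
  have hS'0 : μ S' ≠ 0 := fun h0 ↦ hS (le_antisymm (h.trans h0.le) bot_le)
  simp only [negLogMeas, if_neg hS, if_neg hS'0]
  exact ENNReal.ofReal_le_ofReal <| neg_le_neg <| Real.log_le_log
    (ENNReal.toReal_pos hS (ne_top_of_le_ne_top hS' h)) (ENNReal.toReal_mono hS' h)

/-- Its integral is `bkUpper T μ ε`, definitionally. -/
noncomputable def upperLocalEntropy [MeasurableSpace X] (T : X → X) (μ : Measure X) (ε : ℝ)
    (x : X) : ℝ≥0∞ :=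
  limsup (fun n ↦ negLogMeas μ (bowenBall T n x ε) / n) atTop

section LocalEntropy

variable [MeasurableSpace X] [BorelSpace X] {T : X → X} {μ : Measure X} {ε : ℝ}

lemma measurable_upperLocalEntropy [SecondCountableTopology X] [SFinite μ] (hT : Continuous T)
    (hε : 0 < ε) : Measurable (upperLocalEntropy T μ ε) := by
  refine Measurable.limsup fun n ↦ Measurable.div_const ?_ _
  have hB := measurable_measure_bowenBall (n := n) μ hT hε
  exact Measurable.ite (hB (measurableSet_singleton 0)) measurable_const
    hB.ennreal_toReal.log.neg.ennreal_ofReal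

lemma upperLocalEntropy_apply_le [IsFiniteMeasure μ] (hT : Continuous T)
    (hμ : MeasurePreserving T μ μ) (hε : 0 < ε) (x : X) :
    upperLocalEntropy T μ ε (T x) ≤ upperLocalEntropy T μ ε x :=
  ENNReal.limsup_div_natCast_le_of_le_succ fun n ↦
    negLogMeas_le_negLogMeas μ (measure_ne_top _ _) <|
      calc μ (bowenBall T (n + 1) x ε) ≤ μ (T ⁻¹' bowenBall T n (T x) ε) :=
            measure_mono (bowenBall_succ_subset_preimage hε)
        _ = μ (bowenBall T n (T x) ε) :=
            hμ.measure_preimage (isOpen_bowenBall hT hε).measurableSet.nullMeasurableSet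

end LocalEntropy

theorem Finset.exists_maximal_of_card_le {α : Type*} [DecidableEq α] {P : Finset α → Prop}
    {K : ℕ} (h0 : P ∅) (hK : ∀ F, P F → F.card ≤ K) : ∃ F, P F ∧ ∀ z ∉ F, ¬P (insert z F) := by
  obtain ⟨F, hF, hmin⟩ :=
    (InvImage.wf (fun F : Finset α ↦ K - F.card) wellFounded_lt).has_min {F | P F} ⟨∅, h0⟩
  refine ⟨F, hF, fun z hz hPz ↦ hmin _ hPz ?_⟩
  have := hK _ hPz
  show K - (insert z F).card < K - F.card
  rw [Finset.card_insert_of_notMem hz] at this ⊢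
  omega

theorem card_mul_le_measure_univ {α ι : Type*} [MeasurableSpace α] (μ : Measure α)
    {F : Finset ι} {s : ι → Set α} {c : ℝ≥0∞} (hd : (F : Set ι).PairwiseDisjoint s)
    (hs : ∀ i ∈ F, MeasurableSet (s i)) (hc : ∀ i ∈ F, c ≤ μ (s i)) : F.card * c ≤ μ univ :=
  calc F.card * c = ∑ i ∈ F, c := by simp
    _ ≤ ∑ i ∈ F, μ (s i) := Finset.sum_le_sum hc
    _ = μ (⋃ i ∈ F, s i) := (measure_biUnion_finset hd hs).symm
    _ ≤ μ univ := measure_mono (subset_univ _)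

section Covering

variable [MeasurableSpace X] [OpensMeasurableSpace X] {T : X → X} {μ : Measure X}
  [IsProbabilityMeasure μ] {n : ℕ} {ε c : ℝ}

lemma card_mul_le_one_of_pairwiseDisjoint_bowenBall (hT : Continuous T) (hε : 0 < ε)
    {F : Finset X} (hF : ∀ x ∈ F, ENNReal.ofReal c ≤ μ (bowenBall T n x ε))
    (hd : (F : Set X).PairwiseDisjoint fun x ↦ bowenBall T n x ε) : F.card * c ≤ 1 := by
  have := card_mul_le_measure_univ μ hd (fun x _ ↦ (isOpen_bowenBall hT hε).measurableSet) hF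
  rwa [measure_univ, ← ENNReal.ofReal_natCast, ← ENNReal.ofReal_mul (Nat.cast_nonneg _),
    ENNReal.ofReal_le_one] at this

lemma exists_finset_subset_iUnion_bowenBall_two_mul (hT : Continuous T) (hε : 0 < ε) (hc : 0 < c)
    {A : Set X} (hA : ∀ x ∈ A, ENNReal.ofReal c ≤ μ (bowenBall T n x ε)) :
    ∃ E : Finset X, A ⊆ ⋃ x ∈ E, bowenBall T n x (2 * ε) ∧ E.card * c ≤ 1 := by
  classical
  set P : Finset X → Prop := fun F ↦
    ↑F ⊆ A ∧ (F : Set X).PairwiseDisjoint fun x ↦ bowenBall T n x ε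
  have hcard : ∀ F, P F → F.card * c ≤ 1 := fun F hF ↦
    card_mul_le_one_of_pairwiseDisjoint_bowenBall hT hε (fun x hx ↦ hA x (hF.1 hx)) hF.2
  obtain ⟨E, hE, hmax⟩ := Finset.exists_maximal_of_card_le (P := P) (K := ⌊1 / c⌋₊)
    ⟨by simp, by simp⟩ fun F hF ↦ Nat.le_floor ((le_div_iff₀ hc).2 (hcard F hF))
  refine ⟨E, fun z hz ↦ ?_, hcard E hE⟩
  by_contra hzE
  simp only [mem_iUnion, not_exists] at hzE
  have hzE' : z ∉ E := fun h ↦ hzE z h ((mem_bowenBall (by positivity)).2 fun j _ ↦ by simpa)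
  refine hmax z hzE' ⟨?_, ?_⟩
  · simpa [insert_subset_iff] using ⟨hz, hE.1⟩
  · rw [Finset.coe_insert]
    refine hE.2.insert fun x hx _ ↦ ?_
    have hzx : Disjoint (bowenBall T n x ε) (bowenBall T n z ε) := by
      by_contra h
      exact hzE x hx (mem_bowenBall_two_mul_of_not_disjoint hε h)
    exact hzx.symm

lemma natCast_katokCovNum_mul_le_one (hT : Continuous T) (hε : 0 < ε) (hc : 0 < c) {δ : ℝ}
    {A : Set X} (hAμ : 1 - ENNReal.ofReal δ < μ A)
    (hA : ∀ x ∈ A, ENNReal.ofReal c ≤ μ (bowenBall T n x ε)) :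
    (katokCovNum T μ n (2 * ε) δ : ℝ) * c ≤ 1 := by
  obtain ⟨E, hcov, hcard⟩ := exists_finset_subset_iUnion_bowenBall_two_mul hT hε hc hA
  have hK : katokCovNum T μ n (2 * ε) δ ≤ E.card :=
    Nat.sInf_le ⟨E, rfl, hAμ.trans_le (measure_mono hcov)⟩
  exact (mul_le_mul_of_nonneg_right (Nat.cast_le.2 hK) hc.le).trans hcard

end Covering

lemma katokUpperδ_le_of_eventually_le [MeasurableSpace X] {T : X → X} {μ : Measure X}
    {ε δ s : ℝ} (hs : 0 ≤ s)
    (h : ∀ᶠ n in atTop, (katokCovNum T μ n ε δ : ℝ) ≤ Real.exp (s * n)) :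
    katokUpperδ T μ ε δ ≤ ENNReal.ofReal s := by
  refine limsup_le_of_le (by isBoundedDefault) ?_
  filter_upwards [h, eventually_ne_atTop 0] with n hn hn0
  rw [ENNReal.div_le_iff (Nat.cast_ne_zero.2 hn0) (ENNReal.natCast_ne_top n),
    ← ENNReal.ofReal_natCast, ← ENNReal.ofReal_mul hs]
  refine ENNReal.ofReal_le_ofReal ?_
  rcases (katokCovNum T μ n ε δ).eq_zero_or_pos with h0 | hpos
  · rw [h0, Nat.cast_zero, Real.log_zero]
    positivity
  · exact (Real.log_le_iff_le_exp (by exact_mod_cast hpos)).2 hn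

lemma exp_neg_mul_le_of_negLogMeas_div_lt {α : Type*} [MeasurableSpace α] {μ : Measure α}
    [IsFiniteMeasure μ] {S : Set α} {s : ℝ} {n : ℕ} (hn : n ≠ 0)
    (h : negLogMeas μ S / n < ENNReal.ofReal s) :
    ENNReal.ofReal (Real.exp (-(s * n))) ≤ μ S := by
  have hn' : (n : ℝ≥0∞) ≠ 0 := Nat.cast_ne_zero.2 hn
  by_cases hS : μ S = 0
  · simp [negLogMeas, hS, ENNReal.top_div_of_ne_top (ENNReal.natCast_ne_top n)] at h
  rw [negLogMeas, if_neg hS, ENNReal.div_lt_iff (.inl hn') (.inl (ENNReal.natCast_ne_top n)),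
    ← ENNReal.ofReal_natCast, ← ENNReal.ofReal_mul' (Nat.cast_nonneg _),
    ENNReal.ofReal_lt_ofReal_iff'] at h
  rw [← ENNReal.ofReal_toReal (measure_ne_top μ S)]
  refine ENNReal.ofReal_le_ofReal ?_
  calc Real.exp (-(s * n)) ≤ Real.exp (Real.log (μ S).toReal) := Real.exp_le_exp.2 (by linarith)
    _ = (μ S).toReal := Real.exp_log (ENNReal.toReal_pos hS (measure_ne_top μ S))

lemma katokUpperδ_two_mul_le [MeasurableSpace X] [OpensMeasurableSpace X] {T : X → X}
    {μ : Measure X} [IsProbabilityMeasure μ] {ε δ s : ℝ} (hT : Continuous T) (hε : 0 < ε)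
    (hδ : 0 < δ) (hs : ∀ᵐ x ∂μ, upperLocalEntropy T μ ε x < ENNReal.ofReal s) :
    katokUpperδ T μ (2 * ε) δ ≤ ENNReal.ofReal s := by
  set A : ℕ → Set X := fun N ↦
    {x | ∀ n ≥ N, ENNReal.ofReal (Real.exp (-(s * n))) ≤ μ (bowenBall T n x ε)}
  have hA : Monotone A := fun N M hNM x hx n hn ↦ hx n (hNM.trans hn)
  have hfull : μ (⋃ N, A N) = 1 := by
    refine le_antisymm prob_le_one (measure_univ (μ := μ) ▸ measure_mono_ae ?_)
    filter_upwards [hs] with x hx _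
    obtain ⟨N, hN⟩ := eventually_atTop.1
      ((eventually_lt_of_limsup_lt hx).and (eventually_ne_atTop 0))
    exact mem_iUnion.2 ⟨N, fun n hn ↦ exp_neg_mul_le_of_negLogMeas_div_lt (hN n hn).2 (hN n hn).1⟩
  have hδ1 : 1 - ENNReal.ofReal δ < 1 :=
    ENNReal.sub_lt_self one_ne_top one_ne_zero (ENNReal.ofReal_pos.2 hδ).ne'
  have hlim := tendsto_measure_iUnion_atTop (μ := μ) hA
  rw [hfull] at hlim
  obtain ⟨N, hN⟩ := (hlim.eventually_const_lt hδ1).exists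
  obtain ⟨x, hx⟩ := hs.exists
  refine katokUpperδ_le_of_eventually_le (ENNReal.ofReal_pos.1 (pos_of_gt hx)).le ?_
  filter_upwards [eventually_ge_atTop N] with n hn
  have := natCast_katokCovNum_mul_le_one hT hε (Real.exp_pos _) hN fun x hx ↦ hx n hn
  rwa [Real.exp_neg, ← div_eq_mul_inv, div_le_one (Real.exp_pos _)] at this

/-- `h̄_μ^K(T, 2ε) ≤ h̄_μ^{BK}(T, ε)` for ergodic `μ`. -/
theorem stmt_6 {X : Type*} [MetricSpace X] [CompactSpace X] [MeasurableSpace X] [BorelSpace X]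
    (T : X → X) (hT : Continuous T) (μ : Measure X) [IsProbabilityMeasure μ]
    (hμ : Ergodic T μ) (ε : ℝ) (hε : 0 < ε) :
    katokUpper T μ (2 * ε) ≤ bkUpper T μ ε := by
  have hess : essSup (upperLocalEntropy T μ ε) μ ≤ bkUpper T μ ε :=
    hμ.essSup_le_lintegral_of_comp_le (measurable_upperLocalEntropy hT hε)
      (upperLocalEntropy_apply_le hT hμ.toMeasurePreserving hε)
  refine iSup₂_le fun δ hδ ↦ le_of_forall_gt_imp_ge_of_dense fun z hz ↦ ?_
  obtain rfl | hz' := eq_or_ne z ∞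
  · exact le_top
  rw [← ENNReal.ofReal_toReal hz'] at hz ⊢
  exact katokUpperδ_two_mul_le hT hε hδ.1 (ae_lt_of_essSup_lt (hess.trans_lt hz))
end
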